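/- Under the stated hypotheses on the G-graded T-algebra B, the T-submodule Y = Σ_{g ∈ N(G)} B_g (the sum of the homogeneous components indexed by nuclear elements of G) is contained in the nucleus N(B); Y is closed under multiplication; and the multiplication restricted to Y is associative, so that Y is an associative T-subalgebra of B. (This is the containment Σ_{g∈N(G)} B_g ⊆ N(B) established in Lemma 2.2.) -/

import Mathlib

/-- A metagroup: a set with binary operation, unique left/right division,
an identity element, and an associator `t3` taking values in the center. -/
structure Metagroup (G : Type*) where
  mul : G → G → G
  e : G
  div_left : ∀ a b : G, ∃! x : G, mul a x = b
  div_right : ∀ a b : G, ∃! y : G, mul y a = b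
  e_mul : ∀ g : G, mul e g = g
  mul_e : ∀ g : G, mul g e = g
  t3 : G → G → G → G
  mul_assoc : ∀ a b c : G, mul (mul a b) c = mul (t3 a b c) (mul a (mul b c))
  t3_comm : ∀ a b c d : G, mul (t3 a b c) d = mul d (t3 a b c)
  t3_nl : ∀ a b c d f : G, mul (mul (t3 a b c) d) f = mul (t3 a b c) (mul d f)
  t3_nm : ∀ a b c d f : G, mul (mul d (t3 a b c)) f = mul d (mul (t3 a b c) f)
  t3_nr : ∀ a b c d f : G, mul (mul d f) (t3 a b c) = mul d (mul f (t3 a b c))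

/-- The nucleus `N(G)` of a metagroup: elements associating with everything. -/
def Metagroup.nucleus {G : Type*} (M : Metagroup G) : Set G :=
  {a | ∀ b c : G,
    M.mul (M.mul a b) c = M.mul a (M.mul b c) ∧
    M.mul (M.mul b a) c = M.mul b (M.mul a c) ∧
    M.mul (M.mul b c) a = M.mul b (M.mul c a)}

/-- The nucleus of a (possibly nonassociative) `T`-algebra `B` with
multiplication `mulB`. -/
def algNucleus {T B : Type*} [CommRing T] [AddCommGroup B] [Module T B]
    (mulB : B →ₗ[T] B →ₗ[T] B) : Set B :=
  {x | ∀ b c : B,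
    mulB (mulB x b) c = mulB x (mulB b c) ∧
    mulB (mulB b x) c = mulB b (mulB x c) ∧
    mulB (mulB b c) x = mulB b (mulB c x)}

/-!
Whenever the degrees `g, h, s` of homogeneous `x, y, z` associate in `G`, the associator
`t₃(g, h, s)` is the identity `e`, which acts trivially, so `(x y) z = x (y z)`.  If `g` is
nuclear this holds in each of the three positions for all homogeneous partners, and
bilinearity spreads it to all of `B`.  Closure of `Σ_{g ∈ N(G)} B_g` under multiplication
comes from the grading and the closure of `N(G)` under multiplication.
-/

namespace Metagroup

variable {G : Type*} (M : Metagroup G)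

theorem t3_eq_e {a b c : G} (h : M.mul (M.mul a b) c = M.mul a (M.mul b c)) :
    M.t3 a b c = M.e := by
  obtain ⟨y, -, huniq⟩ := M.div_right (M.mul a (M.mul b c)) (M.mul a (M.mul b c))
  have ht : M.t3 a b c = y := huniq _ ((M.mul_assoc a b c).symm.trans h)
  have he : M.e = y := huniq _ (M.e_mul _)
  rw [ht, he]

theorem mul_mem_nucleus {a b : G} (ha : a ∈ M.nucleus) (hb : b ∈ M.nucleus) :
    M.mul a b ∈ M.nucleus := by
  intro c d
  refine ⟨?_, ?_, ?_⟩
  · rw [(ha b c).1, (ha (M.mul b c) d).1, (hb c d).1, ← (ha b (M.mul c d)).1]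
  · rw [← (ha c b).2.1, (hb (M.mul c a) d).2.1, (ha c (M.mul b d)).2.1, ← (ha b d).1]
  · rw [← (hb (M.mul c d) a).2.2, (ha c d).2.2, (hb c (M.mul d a)).2.2, (ha d b).2.1]

end Metagroup

theorem LinearMap.ext₂_of_iSup_eq_top {R M N P : Type*} [CommSemiring R]
    [AddCommMonoid M] [AddCommMonoid N] [AddCommMonoid P] [Module R M] [Module R N]
    [Module R P] {ι κ : Sort*} {p : ι → Submodule R M} {q : κ → Submodule R N}
    (hp : ⨆ i, p i = ⊤) (hq : ⨆ j, q j = ⊤) {f f' : M →ₗ[R] N →ₗ[R] P}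
    (h : ∀ i j, ∀ x ∈ p i, ∀ y ∈ q j, f x y = f' x y) : f = f' := by
  rw [Submodule.iSup_eq_span] at hp hq
  refine LinearMap.ext_on hp fun x hx => LinearMap.ext_on hq fun y hy => ?_
  obtain ⟨i, hxi⟩ := Set.mem_iUnion.1 hx
  obtain ⟨j, hyj⟩ := Set.mem_iUnion.1 hy
  exact h i j x hxi y hyj

section GradedAlgebra

variable {T B : Type*} [CommRing T] [AddCommGroup B] [Module T B]
  (mulB : B →ₗ[T] B →ₗ[T] B)

def algNucleusSubmodule : Submodule T B where
  carrier := algNucleus mulB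
  zero_mem' b c := by simp
  add_mem' {x y} hx hy b c := by
    obtain ⟨hx₁, hx₂, hx₃⟩ := hx b c
    obtain ⟨hy₁, hy₂, hy₃⟩ := hy b c
    simp only [map_add, LinearMap.add_apply, hx₁, hx₂, hx₃, hy₁, hy₂, hy₃, and_self]
  smul_mem' r x hx b c := by
    obtain ⟨hx₁, hx₂, hx₃⟩ := hx b c
    simp only [map_smul, LinearMap.smul_apply, hx₁, hx₂, hx₃, and_self]

variable {mulB} {G : Type*} {M : Metagroup G} {Bg : G → Submodule T B} {act : G → B →ₗ[T] B}

theorem mul_assoc_of_mul_assoc_degrees (hacte : act M.e = LinearMap.id)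
    (hassoc : ∀ g h s : G, ∀ x ∈ Bg g, ∀ y ∈ Bg h, ∀ z ∈ Bg s,
      mulB (mulB x y) z = act (M.t3 g h s) (mulB x (mulB y z)))
    {g h s : G} (hdeg : M.mul (M.mul g h) s = M.mul g (M.mul h s))
    {x y z : B} (hx : x ∈ Bg g) (hy : y ∈ Bg h) (hz : z ∈ Bg s) :
    mulB (mulB x y) z = mulB x (mulB y z) := by
  rw [hassoc g h s x hx y hy z hz, M.t3_eq_e hdeg, hacte, LinearMap.id_apply]

theorem mem_algNucleus_of_mem_nucleus (hsum : ⨆ g, Bg g = ⊤)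
    (hacte : act M.e = LinearMap.id)
    (hassoc : ∀ g h s : G, ∀ x ∈ Bg g, ∀ y ∈ Bg h, ∀ z ∈ Bg s,
      mulB (mulB x y) z = act (M.t3 g h s) (mulB x (mulB y z)))
    {g : G} (hg : g ∈ M.nucleus) {x : B} (hx : x ∈ Bg g) : x ∈ algNucleus mulB := by
  intro b c
  refine ⟨?_, ?_, ?_⟩
  · exact LinearMap.congr_fun₂ (f := mulB.comp (mulB x)) (g := mulB.compr₂ (mulB x))
      (LinearMap.ext₂_of_iSup_eq_top hsum hsum fun h s _ hy _ hz =>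
        mul_assoc_of_mul_assoc_degrees hacte hassoc (hg h s).1 hx hy hz) b c
  · exact LinearMap.congr_fun₂ (f := mulB.comp (mulB.flip x)) (g := mulB.compl₂ (mulB x))
      (LinearMap.ext₂_of_iSup_eq_top hsum hsum fun h s _ hy _ hz =>
        mul_assoc_of_mul_assoc_degrees hacte hassoc (hg h s).2.1 hy hx hz) b c
  · exact LinearMap.congr_fun₂ (f := mulB.compr₂ (mulB.flip x))
      (g := mulB.compl₂ (mulB.flip x))
      (LinearMap.ext₂_of_iSup_eq_top hsum hsum fun h s _ hy _ hz =>
        mul_assoc_of_mul_assoc_degrees hacte hassoc (hg h s).2.2 hy hz hx) b c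

theorem map₂_iSup_le_of_mul_mem {mul : G → G → G}
    (hgr : ∀ g h : G, ∀ x ∈ Bg g, ∀ y ∈ Bg h, mulB x y ∈ Bg (mul g h))
    {S : Set G} (hS : ∀ g ∈ S, ∀ h ∈ S, mul g h ∈ S) :
    Submodule.map₂ mulB (⨆ g ∈ S, Bg g) (⨆ g ∈ S, Bg g) ≤ ⨆ g ∈ S, Bg g := by
  simp only [Submodule.map₂_iSup_left, Submodule.map₂_iSup_right, iSup_le_iff,
    Submodule.map₂_le]
  intro h hh g hg x hx y hy
  exact Submodule.mem_iSup_of_mem _ (Submodule.mem_iSup_of_mem (hS g hg h hh) (hgr g h x hx y hy))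

end GradedAlgebra

/-- Lemma 2.2 (containment part): for a `G`-graded `T`-algebra `B` over a
metagroup `G`, the submodule `Y = Σ_{g ∈ N(G)} B_g` is contained in the
nucleus `N(B)`, is closed under multiplication, and the multiplication
restricted to `Y` is associative, i.e. `Y` is an associative `T`-subalgebra
of `B`. -/
theorem statement2 {G : Type*} (M : Metagroup G)
    (T B : Type*) [CommRing T] [AddCommGroup B] [Module T B]
    (mulB : B →ₗ[T] B →ₗ[T] B)
    (Bg : G → Submodule T B)
    (hsum : (⨆ g : G, Bg g) = (⊤ : Submodule T B))
    (hgr : ∀ g h : G, ∀ x ∈ Bg g, ∀ y ∈ Bg h, mulB x y ∈ Bg (M.mul g h))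
    (act : G → B →ₗ[T] B)
    (hacte : act M.e = LinearMap.id)
    (hassoc : ∀ g h s : G, ∀ x ∈ Bg g, ∀ y ∈ Bg h, ∀ z ∈ Bg s,
      mulB (mulB x y) z = act (M.t3 g h s) (mulB x (mulB y z))) :
    (∀ x ∈ (⨆ g ∈ M.nucleus, Bg g : Submodule T B), x ∈ algNucleus mulB) ∧
    (∀ x ∈ (⨆ g ∈ M.nucleus, Bg g : Submodule T B),
     ∀ y ∈ (⨆ g ∈ M.nucleus, Bg g : Submodule T B),
      mulB x y ∈ (⨆ g ∈ M.nucleus, Bg g : Submodule T B)) ∧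
    (∀ x ∈ (⨆ g ∈ M.nucleus, Bg g : Submodule T B),
     ∀ y ∈ (⨆ g ∈ M.nucleus, Bg g : Submodule T B),
     ∀ z ∈ (⨆ g ∈ M.nucleus, Bg g : Submodule T B),
      mulB (mulB x y) z = mulB x (mulB y z)) := by
  have hY : (⨆ g ∈ M.nucleus, Bg g) ≤ algNucleusSubmodule mulB :=
    iSup₂_le fun g hg x hx => mem_algNucleus_of_mem_nucleus hsum hacte hassoc hg hx
  have hmul := Submodule.map₂_le.1 <|
    map₂_iSup_le_of_mul_mem hgr fun _ hg _ hh => M.mul_mem_nucleus hg hh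
  exact ⟨fun x hx => hY hx, hmul, fun x hx y _ z _ => (hY hx y z).1⟩
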